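/- arXiv:1912.05547 — 5 statements merged into one kernel-verified Lean document; each statement's English description precedes it below -/
import Mathlib

section
/- For vectors over F_2, the inner product of a vector y with s, where y is the sum of all rows p of a matrix P satisfying p·d = p·e = 1, equals the sum over rows p of P_s (rows of P with p·s = 1) of (p·d)(p·e), which equals (P_s d)·(P_s e). -/
open Matrix Finset

/-
Over `F_2` the indicator of `x = 1` is `x` itself, so row by row both
`[p·d = 1 ∧ p·e = 1] (p·s)` and `[p·s = 1] (p·d)(p·e)` equal `(p·d)(p·e)(p·s)`. Summing over the
rows gives the first identity; the second is the first read on the rows of `P_s`.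
-/

theorem ZMod.ite_and_eq_ite_mul_two (a b c : ZMod 2) :
    (if a = 1 ∧ b = 1 then c else 0) = if c = 1 then a * b else 0 := by
  revert a b c; decide

theorem Matrix.sum_filter_rows_dotProduct {ι κ : Type*} [Fintype ι] [Fintype κ]
    (P : Matrix ι κ (ZMod 2)) (s d e : κ → ZMod 2) :
    (∑ i with P i ⬝ᵥ d = 1 ∧ P i ⬝ᵥ e = 1, P i) ⬝ᵥ s
      = ∑ i with P i ⬝ᵥ s = 1, (P i ⬝ᵥ d) * (P i ⬝ᵥ e) := by
  rw [sum_dotProduct _ (fun i => P i), sum_filter, sum_filter]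
  exact sum_congr rfl fun i _ => ZMod.ite_and_eq_ite_mul_two _ _ _

theorem Matrix.mulVec_dotProduct_mulVec {ι κ R : Type*} [Fintype ι] [Fintype κ]
    [CommSemiring R] (A : Matrix ι κ R) (d e : κ → R) :
    (A *ᵥ d) ⬝ᵥ (A *ᵥ e) = ∑ i, (A i ⬝ᵥ d) * (A i ⬝ᵥ e) :=
  rfl

/-- Over F_2, the inner product with `s` of the sum `y` of all rows `p`
of `P` with `p·d = p·e = 1` equals `∑_{p row of P_s} (p·d)(p·e)`, which equals
`(P_s d)·(P_s e)`, where `P_s` is the submatrix of rows `p` with `p·s = 1`. -/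
theorem stmt_0 (m n : ℕ) (P : Matrix (Fin m) (Fin n) (ZMod 2))
    (s d e : Fin n → ZMod 2)
    (y : Fin n → ZMod 2)
    (hy : y = ∑ i ∈ Finset.univ.filter (fun i => P i ⬝ᵥ d = 1 ∧ P i ⬝ᵥ e = 1), P i)
    (Ps : Matrix {i : Fin m // P i ⬝ᵥ s = 1} (Fin n) (ZMod 2))
    (hPs : ∀ i, Ps i = P i.1) :
    y ⬝ᵥ s = ∑ i ∈ Finset.univ.filter (fun i => P i ⬝ᵥ s = 1), (P i ⬝ᵥ d) * (P i ⬝ᵥ e)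
      ∧ y ⬝ᵥ s = (Ps.mulVec d) ⬝ᵥ (Ps.mulVec e) := by
  have hsum := hy ▸ Matrix.sum_filter_rows_dotProduct P s d e
  refine ⟨hsum, hsum.trans ?_⟩
  rw [Matrix.mulVec_dotProduct_mulVec]
  simp only [hPs]
  exact Finset.sum_subtype _ (by simp) _
end

section
/- Let G be a k×n generator matrix over F_2 such that the code C = {G d : d ∈ F_2^n} contains an odd-parity codeword, and suppose any two codewords c, c' of C satisfy c·c' = 0 iff c or c' has even parity. If d, e are chosen independently and uniformly at random from F_2^n, then the probability that (G d)·(G e) = 0 equals 3/4. -/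
/-!
The parity of `G d` is an `F_2`-linear functional of `d`, and the hypotheses say it is nonzero
and that `(G d)·(G e) ≠ 0` exactly when both `G d` and `G e` are odd. A nonzero functional to
`F_2` takes the value `1` on exactly half of the vectors, so the pairs with both values odd make
up a quarter of all pairs.
-/

open Matrix Finset

lemma ZMod.two_ne_zero_iff_eq_one (x : ZMod 2) : x ≠ 0 ↔ x = 1 := by
  revert x
  decide

section ParityFunctional

variable {V F : Type*} [AddGroup V] [Fintype V] [FunLike F V (ZMod 2)]
  [AddMonoidHomClass F V (ZMod 2)]

lemma two_mul_card_filter_eq_one (f : F) (hf : ∃ v, f v = 1) :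
    2 * #{v | f v = 1} = Fintype.card V := by
  have hfiber : #{v | f v = 0} = #{v | f v = 1} :=
    AddMonoidHom.card_fiber_eq_of_mem_range f ⟨0, map_zero f⟩ hf
  have hsplit : #{v | f v = 0} + #{v | ¬f v = 0} = Fintype.card V :=
    card_filter_add_card_filter_not _
  simp only [← ne_eq, ZMod.two_ne_zero_iff_eq_one] at hsplit
  omega

lemma four_mul_card_filter_eq_zero_or_eq_zero (f : F) (hf : ∃ v, f v = 1) :
    4 * #{vw : V × V | f vw.1 = 0 ∨ f vw.2 = 0} = 3 * Fintype.card (V × V) := by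
  have hodd : #{vw : V × V | ¬(f vw.1 = 0 ∨ f vw.2 = 0)}
      = #{v | f v = 1} * #{v | f v = 1} := by
    rw [← card_product]
    congr 1
    ext vw
    simp [ZMod.two_ne_zero_iff_eq_one]
  have hsplit := card_filter_add_card_filter_not (s := (univ : Finset (V × V)))
    (p := fun vw => f vw.1 = 0 ∨ f vw.2 = 0)
  rw [hodd, card_univ, Fintype.card_prod,
    ← two_mul_card_filter_eq_one f hf] at hsplit
  rw [Fintype.card_prod, ← two_mul_card_filter_eq_one f hf]
  nlinarith

end ParityFunctional

/-- If the code `C = {G d : d}` contains an odd-parity codeword and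
two codewords are orthogonal iff one of them has even parity, then for `d, e`
uniform on `F_2^n`, the probability that `(G d)·(G e) = 0` is `3/4`. -/
theorem stmt_3 (k n : ℕ) (G : Matrix (Fin k) (Fin n) (ZMod 2))
    (C : Set (Fin k → ZMod 2)) (hC : C = Set.range G.mulVec)
    (hodd : ∃ c ∈ C, ∑ i, c i = 1)
    (horth : ∀ c ∈ C, ∀ c' ∈ C, (c ⬝ᵥ c' = 0 ↔ (∑ i, c i = 0 ∨ ∑ i, c' i = 0))) :
    4 * (Finset.univ.filter
          (fun de : (Fin n → ZMod 2) × (Fin n → ZMod 2) =>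
            (G.mulVec de.1) ⬝ᵥ (G.mulVec de.2) = 0)).card
      = 3 * Fintype.card ((Fin n → ZMod 2) × (Fin n → ZMod 2)) := by
  subst hC
  let parity : (Fin n → ZMod 2) →+ ZMod 2 :=
    AddMonoidHom.mk' (fun d => ∑ i, (G *ᵥ d) i) fun d e => by
      simp only [mulVec_add, Pi.add_apply, sum_add_distrib]
  have hparity : ∃ d, parity d = 1 := by
    obtain ⟨_, ⟨d, rfl⟩, hd⟩ := hodd
    exact ⟨d, hd⟩
  rw [filter_congr fun de _ => horth _ ⟨de.1, rfl⟩ _ ⟨de.2, rfl⟩]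
  exact four_mul_card_filter_eq_zero_or_eq_zero parity hparity
end

section
/- Let P be an m×n matrix over F_2, s ∈ F_2^n, and let P_s (rows p with p·s=1) be a generator matrix for a code C (codewords P_s x for x ∈ F_2^n). Fix d ∈ F_2^n with P_s d of even parity, and assume any two codewords c, c' of C satisfy c·c' = 0 iff c or c' has even parity. Then for every e ∈ F_2^n, the vector m̄ = Σ_{p row of P, p·d = p·e = 1} p satisfies m̄·s = 0. -/
/-!
Over `F₂` the sum `m̄ · s` counts, mod 2, the rows `p` with `p · s = p · d = p · e = 1`, i.e. the
rows of `P_s` on which both `P_s d` and `P_s e` are `1`; this is the inner product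
`(P_s d) · (P_s e)`. Both are codewords and `P_s d` has even parity, so they are orthogonal.
-/

open Matrix Finset

namespace ZMod

theorem sum_filter_eq_one_eq_sum_smul {ι M : Type*} [Fintype ι] [AddCommMonoid M]
    [Module (ZMod 2) M] (a : ι → ZMod 2) (f : ι → M) :
    ∑ i ∈ univ.filter (fun i => a i = 1), f i = ∑ i, a i • f i := by
  rw [sum_filter]
  refine sum_congr rfl fun i _ => ?_
  have h01 : ∀ x : ZMod 2, x = 0 ∨ x = 1 := by decide
  rcases h01 (a i) with h | h <;> simp [h]

end ZMod

theorem dotProduct_mulVec_eq_sum_filter_dotProduct {ι κ : Type*} [Fintype ι]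
    [Fintype κ] (P : Matrix ι κ (ZMod 2)) (s d e : κ → ZMod 2)
    (Ps : Matrix {i // P i ⬝ᵥ s = 1} κ (ZMod 2)) (hPs : ∀ i, Ps i = P i.1) :
    (Ps *ᵥ d) ⬝ᵥ (Ps *ᵥ e) =
      (∑ i ∈ univ.filter (fun i => P i ⬝ᵥ d = 1 ∧ P i ⬝ᵥ e = 1), P i) ⬝ᵥ s := by
  have mul_eq_one_iff : ∀ a b : ZMod 2, a * b = 1 ↔ a = 1 ∧ b = 1 := by decide
  calc (Ps *ᵥ d) ⬝ᵥ (Ps *ᵥ e)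
      = ∑ i : {i // P i ⬝ᵥ s = 1}, (P i ⬝ᵥ d) * (P i ⬝ᵥ e) :=
        sum_congr rfl fun i _ => by simp only [mulVec, hPs]
    _ = ∑ i ∈ univ.filter (fun i => P i ⬝ᵥ s = 1), (P i ⬝ᵥ d) * (P i ⬝ᵥ e) :=
        (sum_subtype _ (fun _ => mem_filter_univ _) fun i => (P i ⬝ᵥ d) * (P i ⬝ᵥ e)).symm
    _ = ∑ i, ((P i ⬝ᵥ d) * (P i ⬝ᵥ e)) • (P i ⬝ᵥ s) := by
        rw [ZMod.sum_filter_eq_one_eq_sum_smul]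
        simp only [smul_eq_mul, mul_comm]
    _ = ∑ i ∈ univ.filter (fun i => P i ⬝ᵥ d = 1 ∧ P i ⬝ᵥ e = 1), P i ⬝ᵥ s := by
        simp only [← ZMod.sum_filter_eq_one_eq_sum_smul, mul_eq_one_iff]
    _ = _ := (sum_dotProduct _ _ _).symm

/-- If `P_s d` has even parity and two codewords of the code generated
by `P_s` are orthogonal iff one has even parity, then for every `e`, the vector
`m̄ = Σ_{p row of P, p·d = p·e = 1} p` satisfies `m̄·s = 0`. -/
theorem stmt_5 (m n : ℕ) (P : Matrix (Fin m) (Fin n) (ZMod 2)) (s d : Fin n → ZMod 2)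
    (Ps : Matrix {i : Fin m // P i ⬝ᵥ s = 1} (Fin n) (ZMod 2))
    (hPs : ∀ i, Ps i = P i.1)
    (C : Set ({i : Fin m // P i ⬝ᵥ s = 1} → ZMod 2)) (hC : C = Set.range Ps.mulVec)
    (hd : ∑ i, Ps.mulVec d i = 0)
    (horth : ∀ c ∈ C, ∀ c' ∈ C, (c ⬝ᵥ c' = 0 ↔ (∑ i, c i = 0 ∨ ∑ i, c' i = 0))) :
    ∀ e : Fin n → ZMod 2,
      (∑ i ∈ Finset.univ.filter (fun i => P i ⬝ᵥ d = 1 ∧ P i ⬝ᵥ e = 1), P i) ⬝ᵥ s = 0 := by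
  intro e
  subst hC
  rw [← dotProduct_mulVec_eq_sum_filter_dotProduct P s d e Ps hPs]
  exact (horth _ ⟨d, rfl⟩ _ ⟨e, rfl⟩).mpr (Or.inl hd)
end

section
/- Under the assumptions that P_s has an odd number of rows, P_s generates a code C in which two codewords are orthogonal iff one has even parity, and C contains an odd-parity codeword: if d is chosen uniformly at random from F_2^n, then with probability exactly 1/2, for all e ∈ F_2^n the vector m_e = m* + Σ_{p row of P, p·d = p·e = 1} p satisfies m_e·s = 1, where m* is the sum of all rows of P. -/
open Matrix
open scoped Classical

/-!
The constraint `m_e ⬝ᵥ s = 1` only sees the rows of `P_s`: `m* ⬝ᵥ s` is the number of rows of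
`P_s` modulo 2, hence `1`, and the remaining term is `(P_s d) ⬝ᵥ (P_s e)`. So `d` is good iff the
codeword `P_s d` is orthogonal to all of `C`, which by the orthogonality hypothesis and the
existence of an odd codeword means that `P_s d` has even parity. The parity of `P_s d` is the
linear form `(1 ᵥ* P_s) ⬝ᵥ d`, nonzero because of the odd codeword, and the kernel of a nonzero
linear form on `F_2^n` is half of the space.
-/

open Finset

theorem ZMod.eq_one_of_ne_zero_two {x : ZMod 2} (hx : x ≠ 0) : x = 1 := by
  revert x; decide

theorem ZMod.ite_eq_one_eq_mul (x y : ZMod 2) : (if x = 1 then y else 0) = x * y := by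
  revert x y; decide

theorem ZMod.sum_eq_card_filter_eq_one {ι : Type*} (t : Finset ι) (f : ι → ZMod 2) :
    ∑ i ∈ t, f i = #{i ∈ t | f i = 1} := by
  rw [← sum_boole]
  exact sum_congr rfl fun i _ => by rw [ZMod.ite_eq_one_eq_mul, mul_one]

theorem sum_filter_dotProduct_eq_sum_filter_mul {ι κ : Type*} [Fintype κ]
    (p : ι → κ → ZMod 2) (t : Finset ι) (d e s : κ → ZMod 2) :
    (∑ i ∈ t with p i ⬝ᵥ d = 1 ∧ p i ⬝ᵥ e = 1, p i) ⬝ᵥ s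
      = ∑ i ∈ t with p i ⬝ᵥ s = 1, (p i ⬝ᵥ d) * (p i ⬝ᵥ e) := by
  rw [sum_dotProduct, sum_filter, sum_filter]
  refine sum_congr rfl fun i _ => ?_
  simp only [ite_and, ZMod.ite_eq_one_eq_mul]
  ring

theorem mulVec_dotProduct_mulVec_of_rows {ι κ R : Type*} [Fintype ι] [Fintype κ]
    [CommSemiring R] (p : ι → κ → R) {q : ι → Prop} [DecidablePred q] [Fintype {i // q i}]
    (Q : Matrix {i // q i} κ R) (hQ : ∀ i, Q i = p i.1) (d e : κ → R) :
    Q *ᵥ d ⬝ᵥ Q *ᵥ e = ∑ i with q i, (p i ⬝ᵥ d) * (p i ⬝ᵥ e) := by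
  rw [sum_subtype _ (p := q) (F := ‹_›) (by simp)]
  simp only [dotProduct, mulVec, hQ]

theorem two_mul_card_filter_dotProduct_eq_zero {ι : Type*} [Fintype ι] [DecidableEq ι]
    {v : ι → ZMod 2} (hv : v ≠ 0) : 2 * #{d | v ⬝ᵥ d = 0} = Fintype.card (ι → ZMod 2) := by
  obtain ⟨i, hi⟩ := Function.ne_iff.mp hv
  set t : ι → ZMod 2 := Pi.single i 1
  have hvt : v ⬝ᵥ t = 1 := by
    rw [dotProduct_single, mul_one]
    exact ZMod.eq_one_of_ne_zero_two hi
  have htt : ∀ d : ι → ZMod 2, d + t + t = d := fun d => by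
    rw [add_assoc, ZModModule.add_self, add_zero]
  have hswap : #{d | v ⬝ᵥ d = 0} = #{d | ¬v ⬝ᵥ d = 0} := by
    refine card_bij' (fun d _ => d + t) (fun d _ => d + t) ?_ ?_ (fun d _ => htt d)
      (fun d _ => htt d)
    · intro d hd
      simp only [mem_filter, mem_univ, true_and, dotProduct_add, hvt] at hd ⊢
      rw [hd, zero_add]
      exact one_ne_zero
    · intro d hd
      simp only [mem_filter, mem_univ, true_and, dotProduct_add, hvt] at hd ⊢
      rw [ZMod.eq_one_of_ne_zero_two hd, ZModModule.add_self]
  rw [two_mul, ← card_univ]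
  nth_rw 2 [hswap]
  exact card_filter_add_card_filter_not _

theorem forall_dotProduct_eq_zero_iff_sum_eq_zero {κ : Type*} [Fintype κ]
    {C : Set (κ → ZMod 2)}
    (horth : ∀ c ∈ C, ∀ c' ∈ C, (c ⬝ᵥ c' = 0 ↔ (∑ i, c i = 0 ∨ ∑ i, c' i = 0)))
    (hodd : ∃ c ∈ C, ∑ i, c i = 1) {c : κ → ZMod 2} (hc : c ∈ C) :
    (∀ c' ∈ C, c ⬝ᵥ c' = 0) ↔ ∑ i, c i = 0 := by
  refine ⟨fun h => ?_, fun h c' hc' => (horth c hc c' hc').mpr (Or.inl h)⟩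
  obtain ⟨c₁, hc₁, hsum₁⟩ := hodd
  simpa [hsum₁] using (horth c hc c₁ hc₁).mp (h c₁ hc₁)

/-- Under the assumptions that `P_s` has an odd number of rows, that
two codewords of the code `C` generated by `P_s` are orthogonal iff one has even
parity, and that `C` contains an odd-parity codeword: for `d` uniform on `F_2^n`,
with probability exactly `1/2`, for all `e` the vector
`m_e = m* + Σ_{p·d = p·e = 1} p` satisfies `m_e·s = 1`. -/
theorem stmt_6 (m n : ℕ) (P : Matrix (Fin m) (Fin n) (ZMod 2)) (s : Fin n → ZMod 2)
    (Ps : Matrix {i : Fin m // P i ⬝ᵥ s = 1} (Fin n) (ZMod 2))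
    (hPs : ∀ i, Ps i = P i.1)
    (C : Set ({i : Fin m // P i ⬝ᵥ s = 1} → ZMod 2)) (hC : C = Set.range Ps.mulVec)
    (hrows : Odd (Finset.univ.filter (fun i => P i ⬝ᵥ s = 1)).card)
    (horth : ∀ c ∈ C, ∀ c' ∈ C, (c ⬝ᵥ c' = 0 ↔ (∑ i, c i = 0 ∨ ∑ i, c' i = 0)))
    (hodd : ∃ c ∈ C, ∑ i, c i = 1)
    (mstar : Fin n → ZMod 2) (hmstar : mstar = ∑ i, P i) :
    2 * (Finset.univ.filter
          (fun d : Fin n → ZMod 2 => ∀ e : Fin n → ZMod 2,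
            (mstar + ∑ i ∈ Finset.univ.filter
                (fun i => P i ⬝ᵥ d = 1 ∧ P i ⬝ᵥ e = 1), P i) ⬝ᵥ s = 1)).card
      = Fintype.card (Fin n → ZMod 2) := by
  subst hC hmstar
  have hsum_rows : (∑ i, P i) ⬝ᵥ s = 1 := by
    rw [sum_dotProduct (u := fun i => P i), ZMod.sum_eq_card_filter_eq_one,
      ZMod.natCast_eq_one_iff_odd]
    exact hrows
  have hcross : ∀ d e, (∑ i with P i ⬝ᵥ d = 1 ∧ P i ⬝ᵥ e = 1, P i) ⬝ᵥ s
      = Ps *ᵥ d ⬝ᵥ Ps *ᵥ e := fun d e => by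
    rw [sum_filter_dotProduct_eq_sum_filter_mul (fun i => P i),
      mulVec_dotProduct_mulVec_of_rows _ Ps hPs]
  have hgood : ∀ d, (∀ e, (∑ i, P i + ∑ i with P i ⬝ᵥ d = 1 ∧ P i ⬝ᵥ e = 1, P i) ⬝ᵥ s = 1)
      ↔ (1 ᵥ* Ps) ⬝ᵥ d = 0 := fun d => by
    simp only [add_dotProduct, hsum_rows, hcross, add_eq_left, ← dotProduct_mulVec,
      one_dotProduct]
    rw [← forall_dotProduct_eq_zero_iff_sum_eq_zero horth hodd ⟨d, rfl⟩, Set.forall_mem_range]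
  have hform : 1 ᵥ* Ps ≠ 0 := by
    obtain ⟨_, ⟨e, rfl⟩, hparity⟩ := hodd
    rintro hzero
    rw [← one_dotProduct, dotProduct_mulVec, hzero, zero_dotProduct] at hparity
    exact zero_ne_one hparity
  rw [filter_congr fun d _ => hgood d]
  exact two_mul_card_filter_dotProduct_eq_zero hform
end

section
/- Let C ⊆ F_2^q be a linear code such that every codeword c satisfies wt(c) ≡ 0 or −1 (mod 4). Then for any two codewords c, c', if both c and c' have weight ≡ −1 (mod 4), then c·c' = 1. -/
/-!
Write `A`, `B` for the supports of `c`, `c'`. The support of `c + c'` is `A ∆ B`, so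
`wt (c + c') = wt c + wt c' - 2 |A ∩ B|`, while `c ⬝ᵥ c' = |A ∩ B| mod 2`. If `wt c ≡ wt c' ≡ 3`
then `wt (c + c') ≡ 2 - 2 |A ∩ B| (mod 4)` is even, hence `≡ 0`, which forces `|A ∩ B|` odd.
-/

open Matrix Finset

theorem Finset.card_symmDiff_add_two_mul_card_inter {α : Type*} [DecidableEq α]
    (s t : Finset α) : #(symmDiff s t) + 2 * #(s ∩ t) = #s + #t := by
  rw [symmDiff_eq_sup_sdiff_inf, sup_eq_union, inf_eq_inter,
    card_sdiff_of_subset inter_subset_union, ← card_union_add_card_inter s t]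
  have : #(s ∩ t) ≤ #(s ∪ t) := card_le_card inter_subset_union
  omega

section ZModTwo

variable {ι : Type*} [Fintype ι] [DecidableEq ι]

theorem ZMod.filter_add_eq_one_eq_symmDiff (c c' : ι → ZMod 2) :
    univ.filter (fun i => (c + c') i = 1) =
      symmDiff (univ.filter (fun i => c i = 1)) (univ.filter (fun i => c' i = 1)) := by
  ext i
  have key : ∀ x y : ZMod 2, x + y = 1 ↔ (x = 1 ∧ y ≠ 1) ∨ (y = 1 ∧ x ≠ 1) := by decide
  simp [mem_symmDiff, key]

theorem ZMod.dotProduct_eq_card_inter (c c' : ι → ZMod 2) :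
    c ⬝ᵥ c' = (#(univ.filter (fun i => c i = 1) ∩ univ.filter (fun i => c' i = 1)) : ZMod 2) := by
  have mul_eq : ∀ x y : ZMod 2, x * y = if x = 1 ∧ y = 1 then 1 else 0 := by decide
  simp only [dotProduct, mul_eq, sum_boole, filter_and]

end ZModTwo

/-- In a binary linear code where every codeword has weight ≡ 0 or −1
(mod 4), any two codewords of weight ≡ −1 (mod 4) have inner product 1. -/
theorem stmt_9 (q : ℕ) (C : Submodule (ZMod 2) (Fin q → ZMod 2))
    (hwt : ∀ c ∈ C, (Finset.univ.filter (fun i => c i = 1)).card % 4 = 0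
                  ∨ (Finset.univ.filter (fun i => c i = 1)).card % 4 = 3) :
    ∀ c ∈ C, ∀ c' ∈ C,
      (Finset.univ.filter (fun i => c i = 1)).card % 4 = 3 →
      (Finset.univ.filter (fun i => c' i = 1)).card % 4 = 3 →
      c ⬝ᵥ c' = 1 := by
  intro c hc c' hc' hw hw'
  have hsum := hwt _ (C.add_mem hc hc')
  rw [ZMod.filter_add_eq_one_eq_symmDiff] at hsum
  have hcard := card_symmDiff_add_two_mul_card_inter
    (univ.filter (fun i => c i = 1)) (univ.filter (fun i => c' i = 1))
  have hodd : #(univ.filter (fun i => c i = 1) ∩ univ.filter (fun i => c' i = 1)) % 2 = 1 := by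
    omega
  rw [ZMod.dotProduct_eq_card_inter, ← ZMod.natCast_mod, hodd, Nat.cast_one]
end
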